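/- Let g : ℝ → ℝ be differentiable with g′(x) ≥ κ for all x ∈ ℝ, where κ > 0. Let λ > 0, let z_1, …, z_n ∈ ℝ^d, and let ω_1, …, ω_n ≥ 0. Define the score function G(θ) := λ θ + Σ_{s=1}^n ω_s g(θᵀ z_s) z_s and the matrix V := λ I_d + κ Σ_{s=1}^n ω_s z_s z_sᵀ. Then for all θ_1, θ_2 ∈ ℝ^d, ‖G(θ_1) − G(θ_2)‖_{V⁻¹} ≥ ‖θ_1 − θ_2‖_V. -/

import Mathlib

/-!
Write `x = θ₁ - θ₂` and `y = G θ₁ - G θ₂`. Since `g - κ·id` is monotone,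
`(g a - g b)(a - b) ≥ κ (a - b)²`; applied to `a - b = xᵀ z_s` this gives `xᵀ V x ≤ xᵀ y`.
Cauchy–Schwarz for the inner product `⟪u, v⟫ = uᵀ V v`, applied to `x` and `V⁻¹ y`, gives
`xᵀ y ≤ ‖x‖_V ‖y‖_{V⁻¹}`, so `‖x‖_V² ≤ ‖x‖_V ‖y‖_{V⁻¹}`.
-/

open Matrix

/-- The matrix-weighted (semi)norm `‖x‖_A = √(xᵀ A x)`. -/
noncomputable def mnorm {d : ℕ} (A : Matrix (Fin d) (Fin d) ℝ) (x : Fin d → ℝ) : ℝ :=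
  Real.sqrt (x ⬝ᵥ A.mulVec x)

section MatrixNorm

variable {d : ℕ} {A : Matrix (Fin d) (Fin d) ℝ}

lemma mnorm_nonneg (A : Matrix (Fin d) (Fin d) ℝ) (x : Fin d → ℝ) : 0 ≤ mnorm A x :=
  Real.sqrt_nonneg _

lemma Matrix.PosSemidef.dotProduct_mulVec_self_nonneg (hA : A.PosSemidef) (x : Fin d → ℝ) :
    0 ≤ x ⬝ᵥ A *ᵥ x := by
  simpa using hA.dotProduct_mulVec_nonneg x

lemma mnorm_sq (hA : A.PosSemidef) (x : Fin d → ℝ) : mnorm A x ^ 2 = x ⬝ᵥ A *ᵥ x :=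
  Real.sq_sqrt (hA.dotProduct_mulVec_self_nonneg x)

lemma dotProduct_mulVec_le_mnorm_mul_mnorm (hA : A.PosSemidef) (x y : Fin d → ℝ) :
    x ⬝ᵥ A *ᵥ y ≤ mnorm A x * mnorm A y := by
  let _ := A.toSeminormedAddCommGroup hA
  let _ := A.toInnerProductSpace hA
  have hinner (u v : Fin d → ℝ) : inner ℝ u v = u ⬝ᵥ A *ᵥ v := dotProduct_comm _ _
  have hcs := real_inner_mul_inner_self_le x y
  simp only [hinner] at hcs
  rw [mnorm, mnorm, ← Real.sqrt_mul (hA.dotProduct_mulVec_self_nonneg x)]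
  exact Real.le_sqrt_of_sq_le (by nlinarith)

lemma Matrix.PosDef.mulVec_inv_mulVec (hA : A.PosDef) (y : Fin d → ℝ) : A *ᵥ (A⁻¹ *ᵥ y) = y := by
  rw [mulVec_mulVec, mul_nonsing_inv _ (A.isUnit_iff_isUnit_det.mp hA.isUnit), one_mulVec]

lemma dotProduct_le_mnorm_mul_mnorm_inv (hA : A.PosDef) (x y : Fin d → ℝ) :
    x ⬝ᵥ y ≤ mnorm A x * mnorm A⁻¹ y := by
  have hw : mnorm A (A⁻¹ *ᵥ y) = mnorm A⁻¹ y := by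
    rw [mnorm, mnorm, hA.mulVec_inv_mulVec, dotProduct_comm]
  simpa only [hA.mulVec_inv_mulVec, hw] using
    dotProduct_mulVec_le_mnorm_mul_mnorm hA.posSemidef x (A⁻¹ *ᵥ y)

lemma mnorm_le_mnorm_inv_of_le_dotProduct (hA : A.PosDef) {x y : Fin d → ℝ}
    (h : x ⬝ᵥ A *ᵥ x ≤ x ⬝ᵥ y) : mnorm A x ≤ mnorm A⁻¹ y := by
  have hsq : mnorm A x * mnorm A x ≤ mnorm A x * mnorm A⁻¹ y := by
    rw [← sq, mnorm_sq hA.posSemidef]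
    exact h.trans (dotProduct_le_mnorm_mul_mnorm_inv hA x y)
  rcases (mnorm_nonneg A x).eq_or_lt with hx | hx
  · exact hx ▸ mnorm_nonneg A⁻¹ y
  · exact le_of_mul_le_mul_left hsq hx

end MatrixNorm

lemma mul_sq_sub_le_of_le_deriv {g : ℝ → ℝ} (hg : Differentiable ℝ g) {κ : ℝ}
    (hderiv : ∀ x, κ ≤ deriv g x) (a b : ℝ) : κ * (a - b) ^ 2 ≤ (g a - g b) * (a - b) := by
  have hmono : Monotone fun t => g t - κ * t := by
    refine monotone_of_deriv_nonneg (hg.sub (differentiable_id.const_mul κ)) fun t => ?_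
    rw [((hg t).hasDerivAt.fun_sub ((hasDerivAt_id' t).const_mul κ)).deriv, mul_one]
    linarith [hderiv t]
  rcases le_total a b with hab | hab
  · nlinarith [hmono hab]
  · nlinarith [hmono hab]

section RegularizedModel

variable {ι m : Type*} [Fintype ι] [Fintype m]

lemma posSemidef_sum_smul_vecMulVec_self {ω : ι → ℝ} (hω : ∀ s, 0 ≤ ω s) (z : ι → m → ℝ) :
    (∑ s, ω s • vecMulVec (z s) (z s)).PosSemidef :=
  posSemidef_sum _ fun s _ => by
    simpa using (posSemidef_vecMulVec_self_star (z s)).smul (hω s)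

noncomputable def regularizedScore (g : ℝ → ℝ) (lam : ℝ) (ω : ι → ℝ) (z : ι → m → ℝ)
    (θ : m → ℝ) : m → ℝ :=
  lam • θ + ∑ s, (ω s * g (θ ⬝ᵥ z s)) • z s

lemma dotProduct_regularizedScore_sub (g : ℝ → ℝ) (lam : ℝ) (ω : ι → ℝ) (z : ι → m → ℝ)
    (θ₁ θ₂ : m → ℝ) :
    (θ₁ - θ₂) ⬝ᵥ (regularizedScore g lam ω z θ₁ - regularizedScore g lam ω z θ₂) =
      lam * ((θ₁ - θ₂) ⬝ᵥ (θ₁ - θ₂)) +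
        ∑ s, ω s * ((g (θ₁ ⬝ᵥ z s) - g (θ₂ ⬝ᵥ z s)) * (θ₁ ⬝ᵥ z s - θ₂ ⬝ᵥ z s)) := by
  simp only [regularizedScore, dotProduct_sub, dotProduct_add, dotProduct_smul, dotProduct_sum,
    sub_dotProduct, smul_eq_mul, sub_mul, mul_sub, Finset.sum_sub_distrib, mul_assoc]
  ring

variable [DecidableEq m]

def regularizedDesign (lam κ : ℝ) (ω : ι → ℝ) (z : ι → m → ℝ) : Matrix m m ℝ :=
  lam • 1 + κ • ∑ s, ω s • vecMulVec (z s) (z s)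

lemma posDef_regularizedDesign {lam κ : ℝ} (hlam : 0 < lam) (hκ : 0 ≤ κ) {ω : ι → ℝ}
    (hω : ∀ s, 0 ≤ ω s) (z : ι → m → ℝ) : (regularizedDesign lam κ ω z).PosDef :=
  (PosDef.one.smul hlam).add_posSemidef ((posSemidef_sum_smul_vecMulVec_self hω z).smul hκ)

lemma dotProduct_regularizedDesign_mulVec_self (lam κ : ℝ) (ω : ι → ℝ) (z : ι → m → ℝ)
    (x : m → ℝ) :
    x ⬝ᵥ regularizedDesign lam κ ω z *ᵥ x = lam * (x ⬝ᵥ x) + κ * ∑ s, ω s * (x ⬝ᵥ z s) ^ 2 := by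
  simp only [regularizedDesign, add_mulVec, smul_mulVec, one_mulVec, sum_mulVec, vecMulVec_mulVec,
    dotProduct_add, dotProduct_smul, dotProduct_sum, smul_eq_mul, op_smul_eq_mul, sq,
    dotProduct_comm (z _) x]

lemma dotProduct_regularizedDesign_mulVec_le_dotProduct_regularizedScore_sub {g : ℝ → ℝ}
    (hg : Differentiable ℝ g) {κ : ℝ} (hderiv : ∀ x, κ ≤ deriv g x) (lam : ℝ) {ω : ι → ℝ}
    (hω : ∀ s, 0 ≤ ω s) (z : ι → m → ℝ) (θ₁ θ₂ : m → ℝ) :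
    (θ₁ - θ₂) ⬝ᵥ regularizedDesign lam κ ω z *ᵥ (θ₁ - θ₂) ≤
      (θ₁ - θ₂) ⬝ᵥ (regularizedScore g lam ω z θ₁ - regularizedScore g lam ω z θ₂) := by
  rw [dotProduct_regularizedDesign_mulVec_self, dotProduct_regularizedScore_sub, Finset.mul_sum]
  refine add_le_add le_rfl (Finset.sum_le_sum fun s _ => ?_)
  rw [sub_dotProduct, mul_left_comm]
  exact mul_le_mul_of_nonneg_left (mul_sq_sub_le_of_le_deriv hg hderiv _ _) (hω s)

end RegularizedModel

/-- **Strong monotonicity of the regularized weighted score function.**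
If `g` is differentiable with `g′ ≥ κ > 0`, `G(θ) = λθ + ∑ ω_s g(θᵀ z_s) z_s`
and `V = λ I + κ ∑ ω_s z_s z_sᵀ`, then
`‖G(θ₁) − G(θ₂)‖_{V⁻¹} ≥ ‖θ₁ − θ₂‖_V` for all `θ₁, θ₂`. -/
theorem score_strong_monotonicity (d n : ℕ) (g : ℝ → ℝ) (hg : Differentiable ℝ g)
    (κ : ℝ) (hκ : 0 < κ) (hderiv : ∀ x : ℝ, κ ≤ deriv g x)
    (lam : ℝ) (hlam : 0 < lam)
    (z : Fin n → Fin d → ℝ) (ω : Fin n → ℝ) (hω : ∀ s, 0 ≤ ω s) :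
    ∀ θ₁ θ₂ : Fin d → ℝ,
      mnorm (lam • (1 : Matrix (Fin d) (Fin d) ℝ)
          + κ • ∑ s, ω s • Matrix.vecMulVec (z s) (z s)) (θ₁ - θ₂)
      ≤ mnorm ((lam • (1 : Matrix (Fin d) (Fin d) ℝ)
          + κ • ∑ s, ω s • Matrix.vecMulVec (z s) (z s))⁻¹)
        ((lam • θ₁ + ∑ s, (ω s * g (θ₁ ⬝ᵥ z s)) • z s)
          - (lam • θ₂ + ∑ s, (ω s * g (θ₂ ⬝ᵥ z s)) • z s)) := fun θ₁ θ₂ =>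
  mnorm_le_mnorm_inv_of_le_dotProduct (posDef_regularizedDesign hlam hκ.le hω z)
    (dotProduct_regularizedDesign_mulVec_le_dotProduct_regularizedScore_sub
      hg hderiv lam hω z θ₁ θ₂)
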